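/- Let Δ = 2^{−n} ∈ 2^{−ℕ}, let γ, γ_A, γ_B ∈ (0,1], let 𝐂 ≥ 1, and let ξ ∈ (0,1]. Let 𝒜, ℬ be collections of dyadic intervals of length Δ with |𝒜| = Δ^{−γ_A} and |ℬ| = Δ^{−γ_B}, and assume dist(I₁, I₂) ≥ Δ^ξ for all distinct I₁, I₂ ∈ ℬ. Let μ be a Borel probability measure on ℝ² with spt(μ) ⊂ (∪𝒜) × (∪ℬ) satisfying μ(Q) ≤ 𝐂·Δ^{γ_A + γ_B} for all dyadic squares Q of side 2^{−n}, and let ν be a Borel probability measure on [−1,1] satisfying ν(I) ≤ 𝐂·Δ^γ for all dyadic intervals I of length 2^{−n}. Then there is an absolute constant C > 0 such that ∫_{−1}^{1} ‖(π_c μ)^{(n)}‖_{L²}² dν(c) ≤ C·𝐂·max{Δ^{γ_A + γ_B − 1}, Δ^{γ − 1 − ξ}}. -/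

import Mathlib

/-!
Write `π_c p = p.1 + c p.2` and `Δ = 2^{-n}`. Since `Σ_k θ(I_k)²` is the `θ × θ`-mass of the
union of the squares `I_k × I_k`, `‖(π_c μ)^{(n)}‖²` is at most `Δ⁻¹ (μ × μ){|π_c p - π_c q| < Δ}`.
Integrating in `c` and exchanging the order of integration leaves, for each pair `(p, q)`, the
`ν`-measure of `{c ∈ [-1, 1] : |u + c v| < Δ}` with `(u, v) = p - q`. If `|v| ≥ Δ^ξ` this is an
interval of length `2Δ/|v|`, of `ν`-measure `≲ 𝐂 Δ^{γ-ξ}`. Otherwise separation of `ℬ` puts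
`p.2, q.2` into the same interval, so `|v| < Δ`, and then `|u| ≤ 2Δ`: such pairs lie in a
neighbourhood of the diagonal covered by `15` dyadic squares around `p`, of `μ × μ`-mass
`≲ 𝐂 Δ^{γ_A+γ_B}`.
-/

open MeasureTheory Set Pointwise
open scoped ENNReal

/-- The dyadic interval of scale `r > 0` with index `k`, i.e. `[k·r, (k+1)·r)`. -/
def dyI (r : ℝ) (k : ℤ) : Set ℝ := Set.Ico ((k : ℝ) * r) (((k : ℝ) + 1) * r)

/-- The support of a measure: the set of points all of whose open neighbourhoods
have positive measure. -/
def mSupp {X : Type*} [TopologicalSpace X] [MeasurableSpace X] (ν : Measure X) : Set X :=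
  {x : X | ∀ U : Set X, IsOpen U → x ∈ U → 0 < ν U}

/-- The squared `L²`-norm `‖θ^{(n)}‖_{L²}²` of the `2^{−n}`-discretisation of a measure
`θ` on `ℝ`: since `θ^{(n)}` has density `θ(I_k)/2^{−n}` on each dyadic interval `I_k`
of length `2^{−n}`, its squared `L²`-norm equals `2^n · Σ_k θ(I_k)²`. -/
noncomputable def l2discSq (n : ℕ) (θ : Measure ℝ) : ℝ≥0∞ :=
  (2:ℝ≥0∞) ^ n * ∑' k : ℤ, (θ (dyI ((2:ℝ) ^ (-(n:ℤ))) k)) ^ 2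

lemma mSupp_eq_support {X : Type*} [TopologicalSpace X] [MeasurableSpace X] (μ : Measure X) :
    mSupp μ = μ.support := by
  rw [Measure.support_eq_forall_isOpen]
  ext x
  exact forall_congr' fun U => ⟨fun h hx hU => h hU hx, fun h hU hx => h hx hU⟩

lemma measure_biUnion_le_card_mul {α ι : Type*} [MeasurableSpace α] {μ : Measure α}
    (s : Finset ι) (f : ι → Set α) {m : ℝ≥0∞} (h : ∀ i ∈ s, μ (f i) ≤ m) :
    μ (⋃ i ∈ s, f i) ≤ s.card * m :=
  (measure_biUnion_finset_le s f).trans <| by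
    simpa only [nsmul_eq_mul] using Finset.sum_le_card_nsmul s _ m h

section Dyadic

variable {Δ : ℝ}

lemma mem_dyI_iff (hΔ : 0 < Δ) {x : ℝ} {k : ℤ} : x ∈ dyI Δ k ↔ ⌊x / Δ⌋ = k := by
  rw [dyI, mem_Ico, Int.floor_eq_iff, le_div_iff₀ hΔ, div_lt_iff₀ hΔ]

lemma pairwise_disjoint_dyI (hΔ : 0 < Δ) : Pairwise (Function.onFun Disjoint (dyI Δ)) :=
  fun _ _ hkk' => disjoint_left.2 fun _ hx hx' =>
    hkk' <| ((mem_dyI_iff hΔ).1 hx).symm.trans ((mem_dyI_iff hΔ).1 hx')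

lemma abs_sub_lt_of_mem_dyI {x y : ℝ} {k : ℤ} (hx : x ∈ dyI Δ k) (hy : y ∈ dyI Δ k) :
    |x - y| < Δ := by
  rw [dyI, mem_Ico] at hx hy
  rw [abs_sub_lt_iff]
  constructor <;> linarith

lemma floor_div_mem_Icc_of_abs_sub_le (hΔ : 0 < Δ) {x y : ℝ} {m : ℕ} (h : |x - y| ≤ m * Δ) :
    ⌊y / Δ⌋ ∈ Finset.Icc (⌊x / Δ⌋ - m) (⌊x / Δ⌋ + m) := by
  have h' : |x / Δ - y / Δ| ≤ m := by
    rwa [← sub_div, abs_div, abs_of_pos hΔ, div_le_iff₀ hΔ]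
  rw [abs_sub_le_iff] at h'
  rw [Finset.mem_Icc, ← Int.floor_sub_natCast, ← Int.floor_add_natCast]
  exact ⟨Int.floor_le_floor (by linarith), Int.floor_le_floor (by linarith)⟩

lemma card_Icc_floor_div_le (hΔ : 0 < Δ) {a b : ℝ} (hab : a ≤ b) :
    ((Finset.Icc ⌊a / Δ⌋ ⌊b / Δ⌋).card : ℝ) ≤ (b - a) / Δ + 2 := by
  have hle : ⌊a / Δ⌋ ≤ ⌊b / Δ⌋ := Int.floor_le_floor (by gcongr)
  rw [Int.card_Icc, ← Int.cast_natCast, Int.toNat_of_nonneg (by omega)]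
  push_cast
  have := Int.floor_le (b / Δ)
  have := Int.lt_floor_add_one (a / Δ)
  rw [sub_div]
  linarith

lemma measure_Ioo_le_of_forall_dyI {M : ℝ} (hΔ : 0 < Δ) (hM : 0 ≤ M) {ν : Measure ℝ}
    (hν : ∀ k, ν (dyI Δ k) ≤ ENNReal.ofReal M) {a b : ℝ} (hab : a ≤ b) :
    ν (Ioo a b) ≤ ENNReal.ofReal (((b - a) / Δ + 2) * M) := by
  have hcover : Ioo a b ⊆ ⋃ k ∈ Finset.Icc ⌊a / Δ⌋ ⌊b / Δ⌋, dyI Δ k := fun x hx =>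
    mem_biUnion (Finset.mem_Icc.2 ⟨Int.floor_le_floor (by gcongr; exact hx.1.le),
      Int.floor_le_floor (by gcongr; exact hx.2.le)⟩) ((mem_dyI_iff hΔ).2 rfl)
  calc ν (Ioo a b) ≤ (Finset.Icc ⌊a / Δ⌋ ⌊b / Δ⌋).card * ENNReal.ofReal M :=
        (measure_mono hcover).trans (measure_biUnion_le_card_mul _ _ fun k _ => hν k)
    _ ≤ ENNReal.ofReal (((b - a) / Δ + 2) * M) := by
        rw [← ENNReal.ofReal_natCast, ← ENNReal.ofReal_mul (by positivity)]
        gcongr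
        exact card_Icc_floor_div_le hΔ hab

lemma measure_box_le_of_forall_dyI {M : ℝ} (hΔ : 0 < Δ) {μ : Measure (ℝ × ℝ)}
    (hμ : ∀ j k, μ (dyI Δ j ×ˢ dyI Δ k) ≤ ENNReal.ofReal M) (p : ℝ × ℝ) (m₁ m₂ : ℕ) :
    μ {q | |p.1 - q.1| ≤ m₁ * Δ ∧ |p.2 - q.2| ≤ m₂ * Δ} ≤
      ((2 * m₁ + 1) * (2 * m₂ + 1) : ℕ) * ENNReal.ofReal M := by
  set s := Finset.Icc (⌊p.1 / Δ⌋ - m₁) (⌊p.1 / Δ⌋ + m₁) ×ˢ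
    Finset.Icc (⌊p.2 / Δ⌋ - m₂) (⌊p.2 / Δ⌋ + m₂)
  have hcover : {q : ℝ × ℝ | |p.1 - q.1| ≤ m₁ * Δ ∧ |p.2 - q.2| ≤ m₂ * Δ} ⊆
      ⋃ jk ∈ s, dyI Δ jk.1 ×ˢ dyI Δ jk.2 := fun q ⟨h₁, h₂⟩ =>
    mem_biUnion (x := (⌊q.1 / Δ⌋, ⌊q.2 / Δ⌋))
      (Finset.mem_product.2 ⟨floor_div_mem_Icc_of_abs_sub_le hΔ h₁,
        floor_div_mem_Icc_of_abs_sub_le hΔ h₂⟩)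
      ⟨(mem_dyI_iff hΔ).2 rfl, (mem_dyI_iff hΔ).2 rfl⟩
  have hcard : s.card = (2 * m₁ + 1) * (2 * m₂ + 1) := by
    have hIcc (a : ℤ) (m : ℕ) : (Finset.Icc (a - m) (a + m)).card = 2 * m + 1 := by
      rw [Int.card_Icc]
      omega
    rw [Finset.card_product, hIcc, hIcc]
  exact hcard ▸ (measure_mono hcover).trans (measure_biUnion_le_card_mul _ _ fun jk _ => hμ _ _)

end Dyadic

lemma setOf_abs_add_mul_lt_eq_Ioo {u v Δ : ℝ} (hv : v ≠ 0) :
    {c : ℝ | |u + c * v| < Δ} = Ioo (-(u / v) - Δ / |v|) (-(u / v) + Δ / |v|) := by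
  ext c
  have hv' : 0 < |v| := abs_pos.2 hv
  have key : |u + c * v| = |v| * |c - -(u / v)| := by
    rw [← abs_mul]
    congr 1
    field_simp
    ring
  rw [mem_ofPred_eq, key, ← lt_div_iff₀' hv', abs_sub_lt_iff, mem_Ioo]
  constructor <;> rintro ⟨h₁, h₂⟩ <;> constructor <;> linarith

lemma measure_setOf_abs_add_mul_lt_le {Δ M u v : ℝ} (hΔ : 0 < Δ) (hM : 0 ≤ M) {ν : Measure ℝ}
    (hν : ∀ k, ν (dyI Δ k) ≤ ENNReal.ofReal M) (hv : v ≠ 0) :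
    ν {c | |u + c * v| < Δ} ≤ ENNReal.ofReal ((2 / |v| + 2) * M) := by
  have hv' : 0 < |v| := abs_pos.2 hv
  rw [setOf_abs_add_mul_lt_eq_Ioo hv]
  have hlen : (-(u / v) + Δ / |v| - (-(u / v) - Δ / |v|)) / Δ = 2 / |v| := by
    field_simp
    ring
  exact (measure_Ioo_le_of_forall_dyI hΔ hM hν (by linarith [div_pos hΔ hv'])).trans_eq
    (by rw [hlen])

lemma tsum_map_dyI_sq_le {X : Type*} [MeasurableSpace X] {Δ : ℝ} (hΔ : 0 < Δ) (μ : Measure X)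
    [SFinite μ] {f : X → ℝ} (hf : Measurable f) :
    ∑' k : ℤ, μ.map f (dyI Δ k) ^ 2 ≤ μ.prod μ {pq | |f pq.1 - f pq.2| < Δ} := by
  have hdyI (k : ℤ) : MeasurableSet (dyI Δ k) := measurableSet_Ico
  have hmeas (k : ℤ) : MeasurableSet (f ⁻¹' dyI Δ k) := hf (hdyI k)
  calc ∑' k : ℤ, μ.map f (dyI Δ k) ^ 2
      = μ.prod μ (⋃ k : ℤ, (f ⁻¹' dyI Δ k) ×ˢ (f ⁻¹' dyI Δ k)) := by
        rw [measure_iUnion ?_ fun k => (hmeas k).prod (hmeas k)]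
        · simp only [Measure.map_apply hf (hdyI _), Measure.prod_prod, sq]
        · exact fun k k' hkk' =>
            Set.disjoint_prod.2 (Or.inl ((pairwise_disjoint_dyI hΔ hkk').preimage f))
    _ ≤ μ.prod μ {pq | |f pq.1 - f pq.2| < Δ} := measure_mono fun pq hpq => by
        obtain ⟨k, h₁, h₂⟩ := mem_iUnion.1 hpq
        exact abs_sub_lt_of_mem_dyI h₁ h₂

lemma setLIntegral_measure_prodMk_preimage {α Y : Type*} [MeasurableSpace α] [MeasurableSpace Y]
    (ν : Measure α) [SFinite ν] (ρ : Measure Y) [SFinite ρ] (s : Set α)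
    {E : Set (α × Y)} (hE : MeasurableSet E) :
    ∫⁻ c in s, ρ (Prod.mk c ⁻¹' E) ∂ν = ∫⁻ y, ν (s ∩ (fun c => (c, y)) ⁻¹' E) ∂ρ := by
  rw [← Measure.prod_apply hE, Measure.prod_apply_symm hE]
  refine lintegral_congr fun y => ?_
  rw [Measure.restrict_apply (measurable_prodMk_right hE), inter_comm]

def nearDiag (Δ : ℝ) : Set ((ℝ × ℝ) × (ℝ × ℝ)) :=
  {pq | |pq.1.1 - pq.2.1| ≤ 2 * Δ ∧ |pq.1.2 - pq.2.2| ≤ Δ}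

lemma measurableSet_nearDiag (Δ : ℝ) : MeasurableSet (nearDiag Δ) :=
  (measurableSet_le (f := fun pq : (ℝ × ℝ) × (ℝ × ℝ) => |pq.1.1 - pq.2.1|) (by fun_prop)
    measurable_const).inter
    (measurableSet_le (f := fun pq : (ℝ × ℝ) × (ℝ × ℝ) => |pq.1.2 - pq.2.2|) (by fun_prop)
      measurable_const)

lemma measure_prod_nearDiag_le {Δ M : ℝ} (hΔ : 0 < Δ) {μ : Measure (ℝ × ℝ)}
    [IsProbabilityMeasure μ] (hμ : ∀ j k, μ (dyI Δ j ×ˢ dyI Δ k) ≤ ENNReal.ofReal M) :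
    μ.prod μ (nearDiag Δ) ≤ 15 * ENNReal.ofReal M := by
  rw [Measure.prod_apply (measurableSet_nearDiag Δ)]
  refine (lintegral_mono fun p => ?_).trans_eq (by rw [lintegral_const, measure_univ, mul_one])
  have hbox := measure_box_le_of_forall_dyI hΔ hμ p 2 1
  norm_num at hbox
  exact hbox

lemma measure_Icc_inter_setOf_abs_sub_lt_le {Δ δ M : ℝ} (hΔ : 0 < Δ) (hδ : 0 < δ) (hM : 0 ≤ M)
    {ℬ : Set ℤ}
    (hsep : ∀ k₁ ∈ ℬ, ∀ k₂ ∈ ℬ, k₁ ≠ k₂ → ∀ x ∈ dyI Δ k₁, ∀ y ∈ dyI Δ k₂, δ ≤ |x - y|)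
    {ν : Measure ℝ} [IsProbabilityMeasure ν] (hν : ∀ k, ν (dyI Δ k) ≤ ENNReal.ofReal M)
    {p q : ℝ × ℝ} (hp : p.2 ∈ ⋃ k ∈ ℬ, dyI Δ k) (hq : q.2 ∈ ⋃ k ∈ ℬ, dyI Δ k) :
    ν (Icc (-1) 1 ∩ {c | |(p.1 + c * p.2) - (q.1 + c * q.2)| < Δ}) ≤
      (nearDiag Δ).indicator 1 (p, q) + ENNReal.ofReal ((2 / δ + 2) * M) := by
  set u := p.1 - q.1
  set v := p.2 - q.2
  have hslice : {c : ℝ | |(p.1 + c * p.2) - (q.1 + c * q.2)| < Δ} = {c | |u + c * v| < Δ} := by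
    ext c
    simp only [mem_ofPred_eq, u, v]
    ring_nf
  rw [hslice]
  by_cases hv : δ ≤ |v|
  · calc ν (Icc (-1) 1 ∩ {c | |u + c * v| < Δ}) ≤ ENNReal.ofReal ((2 / |v| + 2) * M) :=
          (measure_mono inter_subset_right).trans
            (measure_setOf_abs_add_mul_lt_le hΔ hM hν (abs_pos.1 (hδ.trans_le hv)))
      _ ≤ ENNReal.ofReal ((2 / δ + 2) * M) := by gcongr
      _ ≤ _ := le_add_self
  have hvΔ : |v| < Δ := by
    obtain ⟨k₁, hk₁, hp⟩ := mem_iUnion₂.1 hp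
    obtain ⟨k₂, hk₂, hq⟩ := mem_iUnion₂.1 hq
    obtain rfl : k₁ = k₂ := by_contra fun hne => hv (hsep k₁ hk₁ k₂ hk₂ hne _ hp _ hq)
    exact abs_sub_lt_of_mem_dyI hp hq
  by_cases hpq : (p, q) ∈ nearDiag Δ
  · rw [indicator_of_mem hpq]
    exact prob_le_one.trans le_self_add
  have hempty : Icc (-1) 1 ∩ {c | |u + c * v| < Δ} = ∅ := by
    refine eq_empty_of_forall_notMem fun c ⟨hc, hcuv⟩ => hpq ⟨?_, hvΔ.le⟩
    calc |u| = |(u + c * v) - c * v| := by ring_nf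
      _ ≤ |u + c * v| + |c| * |v| := (abs_sub _ _).trans_eq (by rw [abs_mul])
      _ ≤ Δ + 1 * Δ := add_le_add (le_of_lt hcuv)
          (mul_le_mul (abs_le.2 hc) hvΔ.le (abs_nonneg _) zero_le_one)
      _ = 2 * Δ := by ring
  rw [hempty, measure_empty]
  exact zero_le

theorem setLIntegral_l2discSq_map_le {n : ℕ} {Δ δ M₁ M₂ : ℝ} (hΔ : Δ = (2:ℝ) ^ (-(n:ℤ)))
    (hδ : 0 < δ) (hM₁ : 0 ≤ M₁) (hM₂ : 0 ≤ M₂) {ℬ : Set ℤ}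
    (hsep : ∀ k₁ ∈ ℬ, ∀ k₂ ∈ ℬ, k₁ ≠ k₂ → ∀ x ∈ dyI Δ k₁, ∀ y ∈ dyI Δ k₂, δ ≤ |x - y|)
    (μ : Measure (ℝ × ℝ)) [IsProbabilityMeasure μ] (hμℬ : ∀ᵐ p ∂μ, p.2 ∈ ⋃ k ∈ ℬ, dyI Δ k)
    (hμ : ∀ j k, μ (dyI Δ j ×ˢ dyI Δ k) ≤ ENNReal.ofReal M₁)
    (ν : Measure ℝ) [IsProbabilityMeasure ν] (hν : ∀ k, ν (dyI Δ k) ≤ ENNReal.ofReal M₂) :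
    ∫⁻ c in Icc (-1) 1, l2discSq n (μ.map fun p => p.1 + c * p.2) ∂ν ≤
      ENNReal.ofReal (2 ^ n * (15 * M₁ + (2 / δ + 2) * M₂)) := by
  have hΔ0 : 0 < Δ := hΔ ▸ zpow_pos two_pos _
  set E : Set (ℝ × ((ℝ × ℝ) × (ℝ × ℝ))) :=
    {x | |(x.2.1.1 + x.1 * x.2.1.2) - (x.2.2.1 + x.1 * x.2.2.2)| < Δ}
  have hE : MeasurableSet E := measurableSet_lt (by fun_prop) measurable_const
  have hae : ∀ᵐ pq ∂μ.prod μ, pq.1.2 ∈ ⋃ k ∈ ℬ, dyI Δ k ∧ pq.2.2 ∈ ⋃ k ∈ ℬ, dyI Δ k :=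
    (Measure.quasiMeasurePreserving_fst.ae hμℬ).and (Measure.quasiMeasurePreserving_snd.ae hμℬ)
  calc ∫⁻ c in Icc (-1) 1, l2discSq n (μ.map fun p => p.1 + c * p.2) ∂ν
      ≤ ∫⁻ c in Icc (-1) 1, 2 ^ n * μ.prod μ (Prod.mk c ⁻¹' E) ∂ν := by
        refine lintegral_mono fun c => ?_
        rw [l2discSq, ← hΔ]
        gcongr
        exact tsum_map_dyI_sq_le hΔ0 μ (by fun_prop)
    _ = 2 ^ n * ∫⁻ pq, ν (Icc (-1) 1 ∩ (fun c => (c, pq)) ⁻¹' E) ∂μ.prod μ := by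
        rw [lintegral_const_mul' _ _ (by simp),
          setLIntegral_measure_prodMk_preimage ν _ _ hE]
    _ ≤ 2 ^ n * ∫⁻ pq, (nearDiag Δ).indicator 1 pq + ENNReal.ofReal ((2 / δ + 2) * M₂)
          ∂μ.prod μ := by
        gcongr 1
        exact lintegral_mono_ae <| hae.mono fun pq h =>
          measure_Icc_inter_setOf_abs_sub_lt_le hΔ0 hδ hM₂ hsep hν h.1 h.2
    _ = 2 ^ n * (μ.prod μ (nearDiag Δ) + ENNReal.ofReal ((2 / δ + 2) * M₂)) := by
        rw [lintegral_add_left (measurable_one.indicator (measurableSet_nearDiag Δ)),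
          lintegral_indicator_one (measurableSet_nearDiag Δ), lintegral_const, measure_univ,
          mul_one]
    _ ≤ 2 ^ n * (15 * ENNReal.ofReal M₁ + ENNReal.ofReal ((2 / δ + 2) * M₂)) := by
        gcongr
        exact measure_prod_nearDiag_le hΔ0 hμ
    _ = ENNReal.ofReal (2 ^ n * (15 * M₁ + (2 / δ + 2) * M₂)) := by
        rw [ENNReal.ofReal_mul (p := 2 ^ n) (by positivity), ENNReal.ofReal_pow zero_le_two,
          ENNReal.ofReal_add (by positivity) (by positivity),
          ENNReal.ofReal_mul (p := 15) (by norm_num)]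
        norm_num

lemma two_pow_mul_le_mul_max {n : ℕ} {Δ CC a γ ξ : ℝ} (hΔ : Δ = (2:ℝ) ^ (-(n:ℤ)))
    (hCC : 0 ≤ CC) (hξ : 0 ≤ ξ) :
    2 ^ n * (15 * (CC * Δ ^ a) + (2 / Δ ^ ξ + 2) * (CC * Δ ^ γ)) ≤
      19 * CC * max (Δ ^ (a - 1)) (Δ ^ (γ - 1 - ξ)) := by
  have hΔ0 : 0 < Δ := hΔ ▸ zpow_pos two_pos _
  have h2n : (2:ℝ) ^ n = Δ⁻¹ := by rw [hΔ, zpow_neg, inv_inv, zpow_natCast]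
  have hΔξ : Δ ^ ξ ≤ 1 :=
    Real.rpow_le_one hΔ0.le (hΔ ▸ zpow_le_one_of_nonpos₀ one_le_two (by simp)) hξ
  have hΔξ0 : 0 < Δ ^ ξ := Real.rpow_pos_of_pos hΔ0 ξ
  have hcoef : 2 / Δ ^ ξ + 2 ≤ 4 / Δ ^ ξ := by
    rw [show (4:ℝ) / Δ ^ ξ = 2 / Δ ^ ξ + 2 / Δ ^ ξ by ring, add_le_add_iff_left,
      le_div_iff₀ hΔξ0]
    linarith
  have hx := mul_le_mul_of_nonneg_left (le_max_left (Δ ^ (a - 1)) (Δ ^ (γ - 1 - ξ))) hCC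
  have hy := mul_le_mul_of_nonneg_left (le_max_right (Δ ^ (a - 1)) (Δ ^ (γ - 1 - ξ))) hCC
  calc 2 ^ n * (15 * (CC * Δ ^ a) + (2 / Δ ^ ξ + 2) * (CC * Δ ^ γ))
      ≤ Δ⁻¹ * (15 * (CC * Δ ^ a) + 4 / Δ ^ ξ * (CC * Δ ^ γ)) := by
        rw [h2n]
        gcongr
    _ = 15 * (CC * Δ ^ (a - 1)) + 4 * (CC * Δ ^ (γ - 1 - ξ)) := by
        rw [Real.rpow_sub hΔ0, Real.rpow_sub hΔ0, Real.rpow_sub hΔ0, Real.rpow_one]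
        field_simp
    _ ≤ 19 * CC * max (Δ ^ (a - 1)) (Δ ^ (γ - 1 - ξ)) := by linarith

/-- **Lemma (elementary projection estimate, `L²` version).**
There is an absolute constant `C > 0` such that the following holds. Let `Δ = 2^{−n}`,
`γ, γ_A, γ_B ∈ (0,1]`, `𝐂 ≥ 1`, `ξ ∈ (0,1]`. Let `𝒜, ℬ` be collections of dyadic
`Δ`-intervals with `|𝒜| = Δ^{−γ_A}`, `|ℬ| = Δ^{−γ_B}`, the intervals of `ℬ` being
`Δ^ξ`-separated. Let `μ` be a probability measure on `(∪𝒜) × (∪ℬ)` with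
`μ(Q) ≤ 𝐂·Δ^{γ_A+γ_B}` for all dyadic `Δ`-squares `Q`, and let `ν` be a probability
measure on `[−1,1]` with `ν(I) ≤ 𝐂·Δ^γ` for all dyadic `Δ`-intervals `I`. Then
`∫_{−1}^{1} ‖(π_c μ)^{(n)}‖_{L²}² dν(c) ≤ C·𝐂·max{Δ^{γ_A+γ_B−1}, Δ^{γ−1−ξ}}`. -/
theorem lemma3 :
    ∃ C : ℝ, 0 < C ∧
    ∀ (n : ℕ) (Δ : ℝ), Δ = (2:ℝ) ^ (-(n:ℤ)) →
    ∀ γ γA γB : ℝ, γ ∈ Set.Ioc (0:ℝ) 1 → γA ∈ Set.Ioc (0:ℝ) 1 → γB ∈ Set.Ioc (0:ℝ) 1 →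
    ∀ CC : ℝ, 1 ≤ CC → ∀ ξ : ℝ, ξ ∈ Set.Ioc (0:ℝ) 1 →
    ∀ 𝒜 ℬ : Set ℤ, (𝒜.ncard : ℝ) = Δ ^ (-γA) → (ℬ.ncard : ℝ) = Δ ^ (-γB) →
    (∀ k₁ ∈ ℬ, ∀ k₂ ∈ ℬ, k₁ ≠ k₂ →
      ∀ x ∈ dyI Δ k₁, ∀ y ∈ dyI Δ k₂, Δ ^ ξ ≤ |x - y|) →
    ∀ μ : Measure (ℝ × ℝ), IsProbabilityMeasure μ →
    mSupp μ ⊆ (⋃ k ∈ 𝒜, dyI Δ k) ×ˢ (⋃ k ∈ ℬ, dyI Δ k) →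
    (∀ k₁ k₂ : ℤ, μ (dyI Δ k₁ ×ˢ dyI Δ k₂) ≤ ENNReal.ofReal (CC * Δ ^ (γA + γB))) →
    ∀ ν : Measure ℝ, IsProbabilityMeasure ν → mSupp ν ⊆ Set.Icc (-1) 1 →
    (∀ k : ℤ, ν (dyI Δ k) ≤ ENNReal.ofReal (CC * Δ ^ γ)) →
    ∫⁻ c in Set.Icc (-1:ℝ) 1,
        l2discSq n (Measure.map (fun p : ℝ × ℝ => p.1 + c * p.2) μ) ∂ν
      ≤ ENNReal.ofReal (C * CC * max (Δ ^ (γA + γB - 1)) (Δ ^ (γ - 1 - ξ))) := by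
  refine ⟨19, by norm_num, ?_⟩
  intro n Δ hΔ γ γA γB _ _ _ CC hCC ξ hξ 𝒜 ℬ _ _ hsep μ _ hμsupp hμ ν _ _ hν
  have hΔ0 : 0 < Δ := hΔ ▸ zpow_pos two_pos _
  have hCC0 : 0 ≤ CC := zero_le_one.trans hCC
  have hμℬ : ∀ᵐ p ∂μ, p.2 ∈ ⋃ k ∈ ℬ, dyI Δ k := by
    filter_upwards [Measure.support_mem_ae (μ := μ)] with p hp
    exact (hμsupp ((mSupp_eq_support μ).symm ▸ hp)).2
  refine (setLIntegral_l2discSq_map_le hΔ (Real.rpow_pos_of_pos hΔ0 ξ) (by positivity)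
    (by positivity) hsep μ hμℬ hμ ν hν).trans ?_
  exact ENNReal.ofReal_le_ofReal (two_pow_mul_le_mul_max hΔ hCC0 hξ.1.le)
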